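/- arXiv:1404.4478 — 4 statements merged into one kernel-verified Lean document; each statement's English description precedes it below -/
import Mathlib

section
/- For every even integer n ≥ 4, the rainbow connection number of the cycle C_n equals n/2. -/
/-!
A rainbow walk uses each colour at most once, so it has at most as many edges as there are
colours; hence `rc G` is at least every distance in `G`. In `C_{2m}` the vertices `0` and `m` are
at distance `m`, since `min v (2m - v)` changes by at most one along an edge. Conversely, colouring
the edge `{a, a + 1}` by `a mod m` makes every arc of at most `m` consecutive edges rainbow, and any
two vertices of `C_{2m}` are the ends of such an arc.
-/

open SimpleGraph Finset

/-- An edge colouring `c` makes `G` rainbow connected: every pair of vertices is joined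
by a walk whose edges have pairwise distinct colours. -/
def IsRainbow {V : Type*} {α : Type*} (G : SimpleGraph V) (c : Sym2 V → α) : Prop :=
  ∀ u v : V, ∃ p : G.Walk u v, (p.edges.map c).Nodup

/-- `G` can be rainbow coloured using `k` colours. -/
def RainbowColorable {V : Type*} (G : SimpleGraph V) (k : ℕ) : Prop :=
  ∃ c : Sym2 V → ℕ, (∀ e ∈ G.edgeSet, c e < k) ∧ IsRainbow G c

/-- The rainbow connection number of `G`. -/
noncomputable def rc {V : Type*} (G : SimpleGraph V) : ℕ :=
  sInf {k | RainbowColorable G k}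

/-- A set of vertices is independent. -/
def IsIndepSet' {V : Type*} (G : SimpleGraph V) (s : Set V) : Prop :=
  ∀ u ∈ s, ∀ v ∈ s, ¬ G.Adj u v

open Fin.NatCast

section Rainbow

variable {V : Type*} {G : SimpleGraph V} {k : ℕ}

theorem rc_le (h : RainbowColorable G k) : rc G ≤ k := Nat.sInf_le h

theorem RainbowColorable.dist_le (h : RainbowColorable G k) (u v : V) : G.dist u v ≤ k := by
  obtain ⟨c, hc, hrainbow⟩ := h
  obtain ⟨p, hp⟩ := hrainbow u v
  have hcolors : (p.edges.map c).toFinset ⊆ range k := by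
    intro x hx
    obtain ⟨e, he, rfl⟩ := List.mem_map.mp (List.mem_toFinset.mp hx)
    exact mem_range.mpr (hc e (p.edges_subset_edgeSet he))
  calc G.dist u v ≤ p.length := SimpleGraph.dist_le p
    _ = (p.edges.map c).toFinset.card := by
      rw [List.toFinset_card_of_nodup hp, List.length_map, Walk.length_edges]
    _ ≤ k := by simpa using card_le_card hcolors

theorem RainbowColorable.dist_le_rc (h : RainbowColorable G k) (u v : V) : G.dist u v ≤ rc G :=
  le_csInf ⟨k, h⟩ fun _ hj => hj.dist_le u v

end Rainbow

theorem SimpleGraph.Walk.le_add_length {V : Type*} {G : SimpleGraph V} (f : V → ℕ)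
    (hf : ∀ x y, G.Adj x y → f y ≤ f x + 1) {u v : V} (p : G.Walk u v) :
    f v ≤ f u + p.length := by
  induction p with
  | nil => simp
  | cons h p ih => have := hf _ _ h; rw [Walk.length_cons]; omega

theorem SimpleGraph.Reachable.le_add_dist {V : Type*} {G : SimpleGraph V} (f : V → ℕ)
    (hf : ∀ x y, G.Adj x y → f y ≤ f x + 1) {u v : V} (h : G.Reachable u v) :
    f v ≤ f u + G.dist u v := by
  obtain ⟨p, hp⟩ := h.exists_walk_length_eq_dist
  exact hp ▸ p.le_add_length f hf

section Cycle

variable {n : ℕ}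

theorem cycleGraph_min_val_le_of_adj {x y : Fin n} (h : (cycleGraph n).Adj x y) :
    min y.val (n - y.val) ≤ min x.val (n - x.val) + 1 := by
  rw [cycleGraph_adj'] at h
  have := x.isLt
  have := y.isLt
  rcases lt_trichotomy x y with hxy | rfl | hyx
  · rw [Fin.coe_sub_iff_lt.mpr hxy, Fin.sub_val_of_le hxy.le] at h
    omega
  · omega
  · rw [Fin.sub_val_of_le hyx.le, Fin.coe_sub_iff_lt.mpr hyx] at h
    omega

theorem cycleGraph_min_val_le_dist_zero [NeZero n] (v : Fin n) :
    min v.val (n - v.val) ≤ (cycleGraph n).dist 0 v := by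
  simpa using (cycleGraph_preconnected 0 v).le_add_dist (fun w : Fin n => min w.val (n - w.val))
    fun _ _ => cycleGraph_min_val_le_of_adj

theorem cycleGraph_adj_add_one [NeZero n] (hn : 1 < n) (u : Fin n) :
    (cycleGraph n).Adj u (u + 1) := by
  rw [cycleGraph_adj', add_sub_cancel_left, Fin.val_one', Nat.mod_eq_of_lt hn]
  exact Or.inr rfl

theorem cycleGraph_exists_walk_edges_eq [NeZero n] (hn : 1 < n) (u : Fin n) (d : ℕ) :
    ∃ p : (cycleGraph n).Walk u (u + d),
      p.edges = (List.range d).map fun i : ℕ => s(u + i, u + i + 1) := by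
  induction d with
  | zero => exact ⟨Walk.nil.copy rfl (by simp), by simp⟩
  | succ d ih =>
    obtain ⟨p, hp⟩ := ih
    rw [Nat.cast_succ, ← add_assoc]
    exact ⟨p.concat (cycleGraph_adj_add_one hn _),
      by simp [Walk.edges_concat, List.range_succ, hp]⟩

end Cycle

/-- On `Fin (m + m)` this gives the edge `s(a, a + 1)` the colour `a mod m`, the wrap-around edge
`s(m + m - 1, 0)` included. -/
def cycleColoring (m : ℕ) {n : ℕ} : Sym2 (Fin n) → ℕ :=
  Sym2.lift ⟨fun a b => (a.val + b.val) / 2 % m, fun _ _ => by dsimp only; rw [add_comm]⟩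

section Coloring

variable {m : ℕ}

theorem cycleColoring_mk_add_one [NeZero (m + m)] (a : Fin (m + m)) :
    cycleColoring m s(a, a + 1) = a.val % m := by
  simp only [cycleColoring, Sym2.lift_mk]
  have ha := a.isLt
  rw [Fin.val_add, Fin.val_one', Nat.add_mod_mod]
  rcases Nat.lt_or_ge (a.val + 1) (m + m) with h | h
  · rw [Nat.mod_eq_of_lt h]
    congr 1
    omega
  · obtain ⟨hm, hwrap⟩ : 0 < m ∧ a.val = m - 1 + m := by omega
    rw [show a.val + 1 = m + m by omega, Nat.mod_self, hwrap, Nat.add_mod_right]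
    congr 1
    omega

theorem exists_walk_nodup_cycleColoring_of_le [NeZero (m + m)] {u v : Fin (m + m)}
    (h : (v - u).val ≤ m) :
    ∃ p : (cycleGraph (m + m)).Walk u v, (p.edges.map (cycleColoring m)).Nodup := by
  obtain ⟨p, hp⟩ :=
    cycleGraph_exists_walk_edges_eq (by have := NeZero.pos (m + m); omega) u (v - u).val
  refine ⟨p.copy rfl (by rw [Fin.cast_val_eq_self, add_sub_cancel]), ?_⟩
  rw [Walk.edges_copy, hp, List.map_map]
  refine List.Nodup.map_on (fun i hi j hj hij => ?_) List.nodup_range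
  rw [List.mem_range] at hi hj
  simp only [Function.comp_apply, cycleColoring_mk_add_one, Fin.val_add,
    Fin.val_cast_of_lt (show i < m + m by omega), Fin.val_cast_of_lt (show j < m + m by omega),
    Nat.mod_mod_of_dvd _ (Dvd.intro_left 2 (two_mul m))] at hij
  have := Nat.ModEq.add_left_cancel' u.val hij
  rwa [Nat.ModEq, Nat.mod_eq_of_lt (by omega), Nat.mod_eq_of_lt (by omega)] at this

theorem isRainbow_cycleColoring (m : ℕ) : IsRainbow (cycleGraph (m + m)) (cycleColoring m) := by
  intro u v
  have : NeZero (m + m) := NeZero.of_pos u.pos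
  rcases le_or_gt (v - u).val m with h | h
  · exact exists_walk_nodup_cycleColoring_of_le h
  · have hvu : (u - v).val ≤ m := by
      have := (v - u).isLt
      rw [← neg_sub, Fin.val_neg', Nat.mod_eq_of_lt (by omega)]
      omega
    obtain ⟨p, hp⟩ := exists_walk_nodup_cycleColoring_of_le hvu
    exact ⟨p.reverse, by rwa [Walk.edges_reverse, List.map_reverse, List.nodup_reverse]⟩

theorem cycleGraph_rainbowColorable (m : ℕ) : RainbowColorable (cycleGraph (m + m)) m :=
  ⟨cycleColoring m, fun e _ => Sym2.ind (fun a _ => Nat.mod_lt _ (by have := a.isLt; omega)) e,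
    isRainbow_cycleColoring m⟩

end Coloring

theorem stmt6_general (n : ℕ) (heven : Even n) : rc (cycleGraph n) = n / 2 := by
  obtain ⟨m, rfl⟩ := heven
  have hcol := cycleGraph_rainbowColorable m
  rw [show (m + m) / 2 = m by omega]
  refine le_antisymm (rc_le hcol) ?_
  rcases Nat.eq_zero_or_pos m with rfl | hm
  · exact Nat.zero_le _
  have : NeZero (m + m) := ⟨by omega⟩
  calc m = min (m : Fin (m + m)).val (m + m - (m : Fin (m + m)).val) := by
        rw [Fin.val_cast_of_lt (by omega)]; omega
    _ ≤ (cycleGraph (m + m)).dist 0 m := cycleGraph_min_val_le_dist_zero _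
    _ ≤ rc (cycleGraph (m + m)) := hcol.dist_le_rc _ _

/-- For every even `n ≥ 4`, the rainbow connection number of the cycle `Cₙ` is `n / 2`. -/
theorem stmt6 (n : ℕ) (hn : 4 ≤ n) (heven : Even n) : rc (cycleGraph n) = n / 2 :=
  stmt6_general n heven
end

section
/- Let G be a connected split graph with clique K of size at least 3 and pendant vertex set pen(G) of size p. If at least three distinct vertices of K each have a pendant neighbour, then rc(G) = p. -/
open SimpleGraph Finset

/-! A rainbow walk between two pendant vertices uses both pendant edges, so the pendant edges
carry pairwise distinct colours and `rc G ≥ p`. Conversely, colour the pendant edges injectively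
with `p` colours and every other edge with one of the three colours of the pendant edges
`x i y i` ("colour `i`"). A pendant vertex can then be attached to any rainbow walk between
non-pendant vertices that avoids colour `i` at an end `x i`. Such walks of length at most three
exist: the triangle `x₀ x₁ x₂` carries all three colours, and a non-pendant vertex outside the
clique has two neighbours in it. -/

namespace SimpleGraph

variable {V : Type*} {G : SimpleGraph V} [Fintype V] [DecidableRel G.Adj]

lemma eq_of_adj_of_degree_eq_one {a b b' : V} (ha : G.degree a = 1) (hb : G.Adj a b)
    (hb' : G.Adj a b') : b = b' :=
  (degree_eq_one_iff_existsUnique_adj.mp ha).unique hb hb'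

lemma exists_adj_ne_of_degree_ne_one {v w : V} (hv : G.degree v ≠ 1) (hw : G.Adj v w) :
    ∃ w', G.Adj v w' ∧ w' ≠ w := by
  by_contra! h
  exact hv (degree_eq_one_iff_existsUnique_adj.mpr ⟨w, hw, h⟩)

lemma mem_edges_of_degree_eq_one {a b z : V} (ha : G.degree a = 1) (hab : G.Adj a b)
    (p : G.Walk a z) (hz : a ≠ z) : s(a, b) ∈ p.edges := by
  cases p with
  | nil => exact absurd rfl hz
  | cons h q => simp [eq_of_adj_of_degree_eq_one ha hab h]

noncomputable def pendantIndex (G : SimpleGraph V) [DecidableRel G.Adj] (v : V) : ℕ :=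
  if h : G.degree v = 1 then Finite.equivFin {v | G.degree v = 1} ⟨v, h⟩ else 0

lemma pendantIndex_lt {a : V} (ha : G.degree a = 1) :
    pendantIndex G a < {v : V | G.degree v = 1}.ncard := by
  simp only [pendantIndex, dif_pos ha]
  exact Fin.isLt _

lemma pendantIndex_injOn : Set.InjOn (pendantIndex G) {v | G.degree v = 1} := by
  intro a ha b hb h
  simp only [pendantIndex, dif_pos (show G.degree a = 1 from ha),
    dif_pos (show G.degree b = 1 from hb)] at h
  simpa using (Finite.equivFin _).injective (Fin.ext h)

end SimpleGraph

section Rainbow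

variable {V : Type*} {G : SimpleGraph V} [Fintype V] [DecidableRel G.Adj]
  {α : Type*} {c : Sym2 V → α}

lemma IsRainbow.ne_of_degree_eq_one (hc : IsRainbow G c) {a a' b b' : V}
    (ha : G.degree a = 1) (hb : G.degree b = 1) (hab : a ≠ b) (hnadj : ¬ G.Adj a b)
    (haa' : G.Adj a a') (hbb' : G.Adj b b') : c s(a, a') ≠ c s(b, b') := by
  obtain ⟨p, hp⟩ := hc a b
  have hmem_a := mem_edges_of_degree_eq_one ha haa' p hab
  have hmem_b : s(b, b') ∈ p.edges := by
    simpa using mem_edges_of_degree_eq_one hb hbb' p.reverse hab.symm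
  intro hcol
  rcases Sym2.eq_iff.mp (List.inj_on_of_nodup_map hp hmem_a hmem_b hcol) with ⟨h, -⟩ | ⟨h, -⟩
  · exact hab h
  · exact hnadj (h ▸ hbb'.symm)

lemma ncard_degree_eq_one_le_of_rainbowColorable {k : ℕ} (hk : RainbowColorable G k)
    (hnadj : ∀ ⦃a b : V⦄, G.degree a = 1 → G.degree b = 1 → ¬ G.Adj a b) :
    {v : V | G.degree v = 1}.ncard ≤ k := by
  obtain ⟨c, hlt, hc⟩ := hk
  have hnbr : ∀ a : V, ∃ b, G.degree a = 1 → G.Adj a b := fun a => by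
    by_cases ha : G.degree a = 1
    · obtain ⟨b, hb, -⟩ := degree_eq_one_iff_existsUnique_adj.mp ha
      exact ⟨b, fun _ => hb⟩
    · exact ⟨a, fun h => absurd h ha⟩
  choose nbr hnbr using hnbr
  calc {v : V | G.degree v = 1}.ncard ≤ (Set.Iio k).ncard := by
        refine Set.ncard_le_ncard_of_injOn (fun a => c s(a, nbr a)) (fun a ha => hlt _ (hnbr a ha))
          (fun a ha b hb h => ?_) (Set.finite_Iio k)
        by_contra hab
        exact hc.ne_of_degree_eq_one ha hb hab (hnadj ha hb) (hnbr a ha) (hnbr b hb) h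
    _ = k := Set.ncard_Iio_nat k

theorem isRainbow_of_forall_degree_ne_one {col : V → α}
    (hnadj : ∀ ⦃a b : V⦄, G.degree a = 1 → G.degree b = 1 → ¬ G.Adj a b)
    (hcol : ∀ ⦃a b : V⦄, G.degree a = 1 → G.Adj a b → c s(a, b) = col a)
    (hinj : Set.InjOn col {a | G.degree a = 1})
    (hcore : ∀ u w, G.degree u ≠ 1 → G.degree w ≠ 1 → ∃ p : G.Walk u w,
      (p.edges.map c).Nodup ∧
        ∀ a, G.degree a = 1 → G.Adj a u ∨ G.Adj a w → col a ∉ p.edges.map c) :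
    IsRainbow G c := by
  have hpend : ∀ a, G.degree a = 1 → ∃ b, G.Adj a b ∧ G.degree b ≠ 1 := fun a ha => by
    obtain ⟨b, hb, -⟩ := degree_eq_one_iff_existsUnique_adj.mp ha
    exact ⟨b, hb, fun hb' => hnadj ha hb' hb⟩
  have hright : ∀ u w, G.degree u ≠ 1 → ∃ p : G.Walk u w, (p.edges.map c).Nodup ∧
      ∀ a, G.degree a = 1 → G.Adj a u → a ≠ w → col a ∉ p.edges.map c := by
    intro u w hu
    by_cases hw : G.degree w = 1
    · obtain ⟨w', hww', hw'⟩ := hpend w hw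
      obtain ⟨p, hp, havoid⟩ := hcore u w' hu hw'
      refine ⟨p.concat hww'.symm, ?_, fun a ha hau haw => ?_⟩
      · have := havoid w hw (Or.inr hww')
        simp_all [Walk.edges_concat, List.nodup_append, Sym2.eq_swap]
      · have h₁ := havoid a ha (Or.inl hau)
        have h₂ : col a ≠ col w := fun h => haw (hinj ha hw h)
        simp_all [Walk.edges_concat, Sym2.eq_swap]
    · obtain ⟨p, hp, havoid⟩ := hcore u w hu hw
      exact ⟨p, hp, fun a ha hau _ => havoid a ha (Or.inl hau)⟩
  intro u w
  by_cases hu : G.degree u = 1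
  · by_cases huw : u = w
    · subst huw
      exact ⟨Walk.nil, by simp⟩
    obtain ⟨u', huu', hu'⟩ := hpend u hu
    obtain ⟨p, hp, havoid⟩ := hright u' w hu'
    refine ⟨Walk.cons huu' p, ?_⟩
    have := havoid u hu huu' huw
    simp_all
  · obtain ⟨p, hp, -⟩ := hright u w hu
    exact ⟨p, hp⟩

end Rainbow

/- `-(i + j)` is the colour other than `i` and `j`. A vertex `v` outside the clique whose only
triangle neighbour is `x i` must reach `x i` avoiding colour `i` through a clique vertex `w`: the
edges `v w` and `w x i` get `outerSpokeColor i` and `cliqueSpokeColor i`, which together with `i`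
are all three colours. A vertex outside the clique with no triangle neighbour gets clique edges
of both colours `1` and `2` (see `spokeColor`), the values of `outerSpokeColor`. -/
def cliqueSpokeColor (i : Fin 3) : Fin 3 := ![2, 0, 0] i

def outerSpokeColor (i : Fin 3) : Fin 3 := ![1, 2, 1] i

def cliqueColor : Option (Fin 3) → Option (Fin 3) → Fin 3
  | some i, some j => -(i + j)
  | some i, none | none, some i => cliqueSpokeColor i
  | none, none => 0

lemma cliqueColor_comm : ∀ a b, cliqueColor a b = cliqueColor b a := by decide

structure SplitTriangleData {V : Type*} (G : SimpleGraph V) [Fintype V] [DecidableRel G.Adj] where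
  K : Set V
  isClique : G.IsClique K
  isIndep : IsIndepSet' G Kᶜ
  x : Fin 3 → V
  injective_x : Function.Injective x
  x_mem : ∀ i, x i ∈ K
  y : Fin 3 → V
  adj_xy : ∀ i, G.Adj (x i) (y i)
  degree_y : ∀ i, G.degree (y i) = 1
  nbr : V → V
  adj_nbr : ∀ v, G.Adj v (nbr v)

namespace SplitTriangleData

variable {V : Type*} {G : SimpleGraph V} [Fintype V] [DecidableRel G.Adj]
  (S : SplitTriangleData G) {u v w : V}

lemma degree_ne_one_of_mem (hv : v ∈ S.K) : G.degree v ≠ 1 := by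
  intro hd
  have h : ∀ i, S.x i = v ∨ S.x i = S.nbr v := fun i => by
    by_cases hi : S.x i = v
    · exact Or.inl hi
    · exact Or.inr (eq_of_adj_of_degree_eq_one hd (S.isClique hv (S.x_mem i) (Ne.symm hi))
        (S.adj_nbr v))
  classical
  have h3 := Finset.card_le_card_of_injOn S.x (s := Finset.univ) (t := {v, S.nbr v})
    (fun i _ => by simpa using h i) S.injective_x.injOn
  have h2 := Finset.card_le_two (a := v) (b := S.nbr v)
  simp only [Finset.card_univ, Fintype.card_fin] at h3
  omega

lemma notMem_of_degree_eq_one (hv : G.degree v = 1) : v ∉ S.K :=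
  fun h => S.degree_ne_one_of_mem h hv

lemma not_adj_of_notMem (hu : u ∉ S.K) (hv : v ∉ S.K) : ¬ G.Adj u v :=
  S.isIndep u hu v hv

lemma mem_of_adj_of_notMem (hu : u ∉ S.K) (h : G.Adj u v) : v ∈ S.K := by
  by_contra hv
  exact S.not_adj_of_notMem hu hv h

lemma not_adj_of_degree_eq_one (S : SplitTriangleData G) ⦃a b : V⦄ (ha : G.degree a = 1)
    (hb : G.degree b = 1) : ¬ G.Adj a b :=
  S.not_adj_of_notMem (S.notMem_of_degree_eq_one ha) (S.notMem_of_degree_eq_one hb)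

lemma degree_x_ne_one (i : Fin 3) : G.degree (S.x i) ≠ 1 := S.degree_ne_one_of_mem (S.x_mem i)

lemma adj_x {i j : Fin 3} (hij : i ≠ j) : G.Adj (S.x i) (S.x j) :=
  S.isClique (S.x_mem i) (S.x_mem j) (S.injective_x.ne hij)

lemma eq_x_of_adj_y {i : Fin 3} (h : G.Adj u (S.y i)) : u = S.x i :=
  eq_of_adj_of_degree_eq_one (S.degree_y i) h.symm (S.adj_xy i).symm

lemma injective_y : Function.Injective S.y := fun i _ h =>
  S.injective_x (S.eq_x_of_adj_y (h ▸ S.adj_xy i))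

lemma x_ne_of_notMem (hv : v ∉ S.K) (i : Fin 3) : S.x i ≠ v :=
  fun h => hv (h ▸ S.x_mem i)

noncomputable def label (v : V) : Option (Fin 3) := Function.partialInv S.x v

lemma label_eq_some_iff {i : Fin 3} : S.label v = some i ↔ S.x i = v :=
  S.injective_x.isPartialInv i v

lemma label_x (i : Fin 3) : S.label (S.x i) = some i := S.label_eq_some_iff.mpr rfl

lemma x_ne_of_label_eq_none (hv : S.label v = none) (i : Fin 3) : S.x i ≠ v := by
  rintro rfl
  simp [label_x] at hv

open Classical in
noncomputable def triangleNbr (v : V) : Option (Fin 3) :=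
  if h : ∃ i, G.Adj v (S.x i) then some h.choose else none

lemma adj_of_triangleNbr_eq_some {i : Fin 3} (h : S.triangleNbr v = some i) :
    G.Adj v (S.x i) := by
  unfold triangleNbr at h
  split_ifs at h with hex
  exact Option.some_injective _ h ▸ hex.choose_spec

lemma not_adj_of_triangleNbr_eq_none (h : S.triangleNbr v = none) (i : Fin 3) :
    ¬ G.Adj v (S.x i) := by
  unfold triangleNbr at h
  split_ifs at h with hex
  exact fun hi => hex ⟨i, hi⟩

lemma label_eq_none_of_triangleNbr_eq_none (h : S.triangleNbr v = none) {a : V}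
    (ha : G.Adj v a) : S.label a = none :=
  Option.eq_none_iff_forall_ne_some.mpr fun i hi =>
    S.not_adj_of_triangleNbr_eq_none h i (S.label_eq_some_iff.mp hi ▸ ha)

open Classical in
noncomputable def spokeColor (z v : V) : Fin 3 :=
  match S.label z, S.triangleNbr v with
  | some i, _ => i
  | none, some i => outerSpokeColor i
  | none, none => if z = S.nbr v then 1 else 2

open Classical in
noncomputable def coreColor (u v : V) : Fin 3 :=
  if u ∈ S.K then (if v ∈ S.K then cliqueColor (S.label u) (S.label v) else S.spokeColor u v)
  else if v ∈ S.K then S.spokeColor v u else 0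

lemma coreColor_comm (u v : V) : S.coreColor u v = S.coreColor v u := by
  unfold coreColor
  split_ifs <;> simp [cliqueColor_comm]

noncomputable def embedColor (i : Fin 3) : ℕ := pendantIndex G (S.y i)

lemma embedColor_injective : Function.Injective S.embedColor := fun i j h =>
  S.injective_y (pendantIndex_injOn (S.degree_y i) (S.degree_y j) h)

noncomputable def edgeColor (u v : V) : ℕ :=
  if G.degree u = 1 ∧ G.degree v ≠ 1 then pendantIndex G u
  else if G.degree v = 1 ∧ G.degree u ≠ 1 then pendantIndex G v
  else S.embedColor (S.coreColor u v)

lemma edgeColor_comm (u v : V) : S.edgeColor u v = S.edgeColor v u := by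
  unfold edgeColor
  split_ifs <;> simp_all [S.coreColor_comm]

noncomputable def coloring : Sym2 V → ℕ := Sym2.lift ⟨S.edgeColor, S.edgeColor_comm⟩

lemma coloring_of_degree_eq_one ⦃a b : V⦄ (ha : G.degree a = 1) (h : G.Adj a b) :
    S.coloring s(a, b) = pendantIndex G a := by
  have hb : G.degree b ≠ 1 := fun hb => S.not_adj_of_degree_eq_one ha hb h
  simp [coloring, edgeColor, ha, hb]

lemma coloring_of_degree_ne_one (hu : G.degree u ≠ 1) (hv : G.degree v ≠ 1) :
    S.coloring s(u, v) = S.embedColor (S.coreColor u v) := by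
  simp [coloring, edgeColor, hu, hv]

lemma coloring_lt : ∀ e ∈ G.edgeSet, S.coloring e < {v : V | G.degree v = 1}.ncard := by
  intro e he
  induction e using Sym2.ind with | h u v =>
  have h : G.Adj u v := he
  by_cases hu : G.degree u = 1
  · rw [S.coloring_of_degree_eq_one hu h]
    exact pendantIndex_lt hu
  by_cases hv : G.degree v = 1
  · rw [Sym2.eq_swap, S.coloring_of_degree_eq_one hv h.symm]
    exact pendantIndex_lt hv
  rw [S.coloring_of_degree_ne_one hu hv]
  exact pendantIndex_lt (S.degree_y _)

lemma coreColor_x_x (i j : Fin 3) : S.coreColor (S.x i) (S.x j) = -(i + j) := by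
  simp [coreColor, S.x_mem, label_x, cliqueColor]

lemma coreColor_x_of_mem (hw : w ∈ S.K) (hw' : S.label w = none) (i : Fin 3) :
    S.coreColor (S.x i) w = cliqueSpokeColor i := by
  simp [coreColor, S.x_mem, hw, hw', label_x, cliqueColor]

lemma coreColor_of_mem (hu : u ∈ S.K) (hu' : S.label u = none) (hw : w ∈ S.K)
    (hw' : S.label w = none) : S.coreColor u w = 0 := by
  simp [coreColor, hu, hu', hw, hw', cliqueColor]

lemma coreColor_x_of_notMem (hv : v ∉ S.K) (i : Fin 3) : S.coreColor (S.x i) v = i := by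
  simp [coreColor, S.x_mem, hv, spokeColor, label_x]

lemma coreColor_of_triangleNbr_eq_some (hw : w ∈ S.K) (hw' : S.label w = none) (hv : v ∉ S.K)
    {i : Fin 3} (h : S.triangleNbr v = some i) : S.coreColor w v = outerSpokeColor i := by
  simp [coreColor, hw, hw', hv, spokeColor, h]

lemma coreColor_nbr (hv : v ∉ S.K) (h : S.triangleNbr v = none) :
    S.coreColor (S.nbr v) v = 1 := by
  simp [coreColor, S.mem_of_adj_of_notMem hv (S.adj_nbr v),
    S.label_eq_none_of_triangleNbr_eq_none h (S.adj_nbr v), hv, spokeColor, h]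

lemma coreColor_of_ne_nbr (hw : w ∈ S.K) (hw' : S.label w = none) (hv : v ∉ S.K)
    (h : S.triangleNbr v = none) (hwv : w ≠ S.nbr v) : S.coreColor w v = 2 := by
  simp [coreColor, hw, hw', hv, spokeColor, h, hwv]

def CoreWalk (u w : V) (L : List (Fin 3)) : Prop :=
  ∃ p : G.Walk u w, p.edges.map S.coloring = L.map S.embedColor

lemma coreWalk_nil (u : V) : S.CoreWalk u u [] := ⟨Walk.nil, rfl⟩

lemma coreWalk_cons {L : List (Fin 3)} (h : G.Adj u v) (hu : G.degree u ≠ 1)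
    (hv : G.degree v ≠ 1) (hp : S.CoreWalk v w L) : S.CoreWalk u w (S.coreColor u v :: L) := by
  obtain ⟨p, hp⟩ := hp
  exact ⟨Walk.cons h p, by simp [hp, S.coloring_of_degree_ne_one hu hv]⟩

/-- A rainbow walk in core colours, none of which belongs to an end: colour `i` belongs to
`x i`, where it is also the colour of the pendant edge `x i y i`. -/
def RainbowLinked (u w : V) : Prop :=
  ∃ L, S.CoreWalk u w L ∧ L.Nodup ∧ ∀ i ∈ L, S.x i ≠ u ∧ S.x i ≠ w

lemma rainbowLinked_refl (u : V) : S.RainbowLinked u u :=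
  ⟨[], S.coreWalk_nil u, List.nodup_nil, by simp⟩

lemma RainbowLinked.symm {S : SplitTriangleData G} (h : S.RainbowLinked u w) :
    S.RainbowLinked w u := by
  obtain ⟨L, ⟨p, hp⟩, hnd, hL⟩ := h
  refine ⟨L.reverse, ⟨p.reverse, by simp [hp, List.map_reverse]⟩, List.nodup_reverse.mpr hnd,
    fun i hi => (hL i (List.mem_reverse.mp hi)).symm⟩

lemma rainbowLinked_cons (h : G.Adj u v) (hu : G.degree u ≠ 1) (hv : G.degree v ≠ 1)
    (hxv : S.x (S.coreColor u v) = v) (hvw : v ≠ w) (hxu : ∀ i, S.x i ≠ u)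
    (hl : S.RainbowLinked v w) : S.RainbowLinked u w := by
  obtain ⟨L, hp, hnd, hL⟩ := hl
  refine ⟨_, S.coreWalk_cons h hu hv hp,
    List.nodup_cons.mpr ⟨fun hmem => (hL _ hmem).1 hxv, hnd⟩, ?_⟩
  rintro i (_ | ⟨_, hi⟩)
  · exact ⟨hxu _, by rwa [hxv]⟩
  · exact ⟨hxu i, (hL i hi).2⟩

lemma rainbowLinked_of_adj (h : G.Adj u w) (hu : G.degree u ≠ 1) (hw : G.degree w ≠ 1)
    (hxu : S.x (S.coreColor u w) ≠ u) (hxw : S.x (S.coreColor u w) ≠ w) :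
    S.RainbowLinked u w :=
  ⟨_, S.coreWalk_cons h hu hw (S.coreWalk_nil w), List.nodup_singleton _, by simp [hxu, hxw]⟩

lemma rainbowLinked_of_adj_adj {a : V} (h₁ : G.Adj u a) (h₂ : G.Adj a w)
    (hu : G.degree u ≠ 1) (ha : G.degree a ≠ 1) (hw : G.degree w ≠ 1) {i j : Fin 3}
    (hi : S.coreColor u a = i) (hj : S.coreColor a w = j) (hij : i ≠ j)
    (hx : ∀ k ∈ [i, j], S.x k ≠ u ∧ S.x k ≠ w) : S.RainbowLinked u w := by
  refine ⟨[i, j], ?_, by simpa using hij, hx⟩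
  have := S.coreWalk_cons h₁ hu ha (S.coreWalk_cons h₂ ha hw (S.coreWalk_nil w))
  rwa [hi, hj] at this

lemma x_coreColor_ne_of_mem (hu : u ∈ S.K) (hw : w ∈ S.K) (huw : u ≠ w) :
    S.x (S.coreColor u w) ≠ u := by
  cases hlu : S.label u with
  | none => exact S.x_ne_of_label_eq_none hlu _
  | some i =>
    obtain rfl := S.label_eq_some_iff.mp hlu
    refine S.injective_x.ne ?_
    cases hlw : S.label w with
    | none =>
      rw [S.coreColor_x_of_mem hw hlw]
      exact (by decide : ∀ i : Fin 3, cliqueSpokeColor i ≠ i) i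
    | some j =>
      obtain rfl := S.label_eq_some_iff.mp hlw
      rw [S.coreColor_x_x]
      exact (by decide : ∀ i j : Fin 3, i ≠ j → -(i + j) ≠ i) i j fun h => huw (h ▸ rfl)

lemma rainbowLinked_of_mem (hu : u ∈ S.K) (hw : w ∈ S.K) : S.RainbowLinked u w := by
  by_cases huw : u = w
  · exact huw ▸ S.rainbowLinked_refl u
  refine S.rainbowLinked_of_adj (S.isClique hu hw huw) (S.degree_ne_one_of_mem hu)
    (S.degree_ne_one_of_mem hw) (S.x_coreColor_ne_of_mem hu hw huw) ?_
  rw [S.coreColor_comm]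
  exact S.x_coreColor_ne_of_mem hw hu (Ne.symm huw)

lemma rainbowLinked_x_of_adj_x (hv : v ∉ S.K) (hvd : G.degree v ≠ 1) {i k : Fin 3}
    (hk : G.Adj v (S.x k)) (hik : i ≠ k) : S.RainbowLinked (S.x i) v := by
  refine S.rainbowLinked_of_adj_adj (S.adj_x hik) hk.symm (S.degree_x_ne_one i)
    (S.degree_x_ne_one k) hvd (S.coreColor_x_x i k) (S.coreColor_x_of_notMem hv k)
    ((by decide : ∀ i k : Fin 3, i ≠ k → -(i + k) ≠ k) i k hik) ?_
  simp only [List.mem_cons, List.not_mem_nil, or_false, forall_eq_or_imp, forall_eq,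
    S.injective_x.ne_iff, S.x_ne_of_notMem hv, Ne, not_false_eq_true, and_true]
  exact ⟨(by decide : ∀ i k : Fin 3, i ≠ k → -(i + k) ≠ i) i k hik, Ne.symm hik⟩

lemma rainbowLinked_x_of_adj_mem (hv : v ∉ S.K) (hvd : G.degree v ≠ 1) {a : V} (ha : G.Adj v a)
    (ha' : S.label a = none) {i : Fin 3} (hc : S.coreColor a v = outerSpokeColor i) :
    S.RainbowLinked (S.x i) v := by
  have haK := S.mem_of_adj_of_notMem hv ha
  refine S.rainbowLinked_of_adj_adj (S.isClique (S.x_mem i) haK (S.x_ne_of_label_eq_none ha' i))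
    ha.symm (S.degree_x_ne_one i) (S.degree_ne_one_of_mem haK) hvd
    (S.coreColor_x_of_mem haK ha' i) hc
    ((by decide : ∀ i : Fin 3, cliqueSpokeColor i ≠ outerSpokeColor i) i) ?_
  simp only [List.mem_cons, List.not_mem_nil, or_false, forall_eq_or_imp, forall_eq,
    S.injective_x.ne_iff, S.x_ne_of_notMem hv, Ne, not_false_eq_true, and_true]
  exact (by decide : ∀ i : Fin 3, cliqueSpokeColor i ≠ i ∧ outerSpokeColor i ≠ i) i

lemma rainbowLinked_x_of_notMem (hv : v ∉ S.K) (hvd : G.degree v ≠ 1) (i : Fin 3) :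
    S.RainbowLinked (S.x i) v := by
  by_cases hk : ∃ k, k ≠ i ∧ G.Adj v (S.x k)
  · obtain ⟨k, hki, hk⟩ := hk
    exact S.rainbowLinked_x_of_adj_x hv hvd hk (Ne.symm hki)
  push Not at hk
  suffices ∃ a, G.Adj v a ∧ S.label a = none ∧ S.coreColor a v = outerSpokeColor i by
    obtain ⟨a, ha, ha', hc⟩ := this
    exact S.rainbowLinked_x_of_adj_mem hv hvd ha ha' hc
  cases hT : S.triangleNbr v with
  | some j =>
    have hj := S.adj_of_triangleNbr_eq_some hT
    obtain rfl : j = i := by_contra fun h => hk j h hj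
    obtain ⟨a, ha, hax⟩ := exists_adj_ne_of_degree_ne_one hvd hj
    have ha' : S.label a = none := Option.eq_none_iff_forall_ne_some.mpr fun k hk' => by
      obtain rfl := S.label_eq_some_iff.mp hk'
      exact hk k (fun h => hax (h ▸ rfl)) ha
    exact ⟨a, ha, ha', S.coreColor_of_triangleNbr_eq_some (S.mem_of_adj_of_notMem hv ha) ha' hv hT⟩
  | none =>
    by_cases h1 : outerSpokeColor i = 1
    · exact ⟨S.nbr v, S.adj_nbr v, S.label_eq_none_of_triangleNbr_eq_none hT (S.adj_nbr v),
        (S.coreColor_nbr hv hT).trans h1.symm⟩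
    · obtain ⟨a, ha, hax⟩ := exists_adj_ne_of_degree_ne_one hvd (S.adj_nbr v)
      have ha' := S.label_eq_none_of_triangleNbr_eq_none hT ha
      refine ⟨a, ha, ha', ?_⟩
      rw [S.coreColor_of_ne_nbr (S.mem_of_adj_of_notMem hv ha) ha' hv hT hax]
      exact (by decide : ∀ i : Fin 3, outerSpokeColor i ≠ 1 → 2 = outerSpokeColor i) i h1

lemma rainbowLinked_of_label_eq_none (hu : u ∈ S.K) (hu' : S.label u = none) (hv : v ∉ S.K)
    (hvd : G.degree v ≠ 1) : S.RainbowLinked u v := by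
  have hud := S.degree_ne_one_of_mem hu
  have hx : ∀ k, S.x k ≠ u ∧ S.x k ≠ v :=
    fun k => ⟨S.x_ne_of_label_eq_none hu' k, S.x_ne_of_notMem hv k⟩
  by_cases huv : G.Adj u v
  · exact S.rainbowLinked_of_adj huv hud hvd (hx _).1 (hx _).2
  cases hT : S.triangleNbr v with
  | some j =>
    have hj := S.adj_of_triangleNbr_eq_some hT
    refine S.rainbowLinked_of_adj_adj (S.isClique hu (S.x_mem j) (hx j).1.symm) hj.symm hud
      (S.degree_x_ne_one j) hvd (by rw [S.coreColor_comm, S.coreColor_x_of_mem hu hu'])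
      (S.coreColor_x_of_notMem hv j) ((by decide : ∀ j : Fin 3, cliqueSpokeColor j ≠ j) j)
      fun k _ => hx k
  | none =>
    have hA := S.mem_of_adj_of_notMem hv (S.adj_nbr v)
    refine S.rainbowLinked_of_adj_adj (S.isClique hu hA fun h => huv (h ▸ (S.adj_nbr v).symm))
      (S.adj_nbr v).symm hud (S.degree_ne_one_of_mem hA) hvd
      (S.coreColor_of_mem hu hu' hA (S.label_eq_none_of_triangleNbr_eq_none hT (S.adj_nbr v)))
      (S.coreColor_nbr hv hT) (by decide) fun k _ => hx k

lemma rainbowLinked_of_triangleNbr_eq_some (hu : u ∉ S.K) (hud : G.degree u ≠ 1) (hv : v ∉ S.K)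
    (hvd : G.degree v ≠ 1) {i : Fin 3} (hT : S.triangleNbr u = some i) :
    S.RainbowLinked u v :=
  S.rainbowLinked_cons (S.adj_of_triangleNbr_eq_some hT) hud (S.degree_x_ne_one i)
    (by rw [S.coreColor_comm, S.coreColor_x_of_notMem hu]) (S.x_ne_of_notMem hv i)
    (S.x_ne_of_notMem hu) (S.rainbowLinked_x_of_notMem hv hvd i)

lemma rainbowLinked_of_triangleNbr_eq_none (hu : u ∉ S.K) (hud : G.degree u ≠ 1) (hv : v ∉ S.K)
    (hvd : G.degree v ≠ 1) (hTu : S.triangleNbr u = none) (hTv : S.triangleNbr v = none) :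
    S.RainbowLinked u v := by
  have hx : ∀ k, S.x k ≠ u ∧ S.x k ≠ v := fun k => ⟨S.x_ne_of_notMem hu k, S.x_ne_of_notMem hv k⟩
  have hA := S.mem_of_adj_of_notMem hu (S.adj_nbr u)
  have hA' := S.label_eq_none_of_triangleNbr_eq_none hTu (S.adj_nbr u)
  have hc₁ : S.coreColor u (S.nbr u) = 1 := by rw [S.coreColor_comm, S.coreColor_nbr hu hTu]
  by_cases hb : ∃ b, G.Adj v b ∧ b ≠ S.nbr v ∧ b ≠ S.nbr u
  · obtain ⟨b, hvb, hbv, hbu⟩ := hb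
    have hbK := S.mem_of_adj_of_notMem hv hvb
    have hb' := S.label_eq_none_of_triangleNbr_eq_none hTv hvb
    have hbd := S.degree_ne_one_of_mem hbK
    refine ⟨[1, 0, 2], ?_, by decide, fun k _ => hx k⟩
    have := S.coreWalk_cons (S.adj_nbr u) hud (S.degree_ne_one_of_mem hA)
      (S.coreWalk_cons (S.isClique hA hbK hbu.symm) (S.degree_ne_one_of_mem hA) hbd
        (S.coreWalk_cons hvb.symm hbd hvd (S.coreWalk_nil v)))
    rwa [hc₁, S.coreColor_of_mem hA hA' hbK hb', S.coreColor_of_ne_nbr hbK hb' hv hTv hbv] at this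
  · push Not at hb
    obtain ⟨b, hvb, hbv⟩ := exists_adj_ne_of_degree_ne_one hvd (S.adj_nbr v)
    obtain rfl := hb b hvb hbv
    exact S.rainbowLinked_of_adj_adj (S.adj_nbr u) hvb.symm hud (S.degree_ne_one_of_mem hA) hvd
      hc₁ (S.coreColor_of_ne_nbr hA hA' hv hTv hbv) (by decide) fun k _ => hx k

lemma rainbowLinked_of_mem_of_notMem (hu : u ∈ S.K) (hv : v ∉ S.K) (hvd : G.degree v ≠ 1) :
    S.RainbowLinked u v := by
  cases hl : S.label u with
  | none => exact S.rainbowLinked_of_label_eq_none hu hl hv hvd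
  | some i =>
    obtain rfl := S.label_eq_some_iff.mp hl
    exact S.rainbowLinked_x_of_notMem hv hvd i

lemma rainbowLinked_of_notMem (hu : u ∉ S.K) (hud : G.degree u ≠ 1) (hv : v ∉ S.K)
    (hvd : G.degree v ≠ 1) : S.RainbowLinked u v := by
  cases hTu : S.triangleNbr u with
  | some i => exact S.rainbowLinked_of_triangleNbr_eq_some hu hud hv hvd hTu
  | none =>
    cases hTv : S.triangleNbr v with
    | some j => exact (S.rainbowLinked_of_triangleNbr_eq_some hv hvd hu hud hTv).symm
    | none => exact S.rainbowLinked_of_triangleNbr_eq_none hu hud hv hvd hTu hTv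

lemma rainbowLinked (hu : G.degree u ≠ 1) (hv : G.degree v ≠ 1) : S.RainbowLinked u v := by
  by_cases huK : u ∈ S.K <;> by_cases hvK : v ∈ S.K
  · exact S.rainbowLinked_of_mem huK hvK
  · exact S.rainbowLinked_of_mem_of_notMem huK hvK hv
  · exact (S.rainbowLinked_of_mem_of_notMem hvK huK hu).symm
  · exact S.rainbowLinked_of_notMem huK hu hvK hv

lemma RainbowLinked.avoids {S : SplitTriangleData G} (h : S.RainbowLinked u w) :
    ∃ p : G.Walk u w, (p.edges.map S.coloring).Nodup ∧
      ∀ a, G.degree a = 1 → G.Adj a u ∨ G.Adj a w →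
        pendantIndex G a ∉ p.edges.map S.coloring := by
  obtain ⟨L, ⟨p, hp⟩, hnd, hL⟩ := h
  refine ⟨p, hp ▸ hnd.map S.embedColor_injective, fun a ha hadj hmem => ?_⟩
  obtain ⟨i, hi, hia⟩ := List.mem_map.mp (hp ▸ hmem)
  obtain rfl : S.y i = a := pendantIndex_injOn (S.degree_y i) ha hia
  rcases hadj with h | h
  · exact (hL i hi).1 (S.eq_x_of_adj_y h.symm).symm
  · exact (hL i hi).2 (S.eq_x_of_adj_y h.symm).symm

theorem isRainbow : IsRainbow G S.coloring :=
  isRainbow_of_forall_degree_ne_one S.not_adj_of_degree_eq_one S.coloring_of_degree_eq_one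
    pendantIndex_injOn fun _ _ hu hw => (S.rainbowLinked hu hw).avoids

theorem rainbowColorable (S : SplitTriangleData G) :
    RainbowColorable G {v : V | G.degree v = 1}.ncard :=
  ⟨S.coloring, S.coloring_lt, S.isRainbow⟩

end SplitTriangleData

lemma rc_eq_of_rainbowColorable {V : Type*} {G : SimpleGraph V} {k : ℕ}
    (hk : RainbowColorable G k) (hmin : ∀ m, RainbowColorable G m → k ≤ m) : rc G = k :=
  le_antisymm (Nat.sInf_le hk) (le_csInf ⟨k, hk⟩ hmin)

theorem stmt9_general {V : Type*} [Fintype V] (G : SimpleGraph V) [DecidableRel G.Adj]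
    (hconn : G.Connected)
    (K : Set V) (hK : G.IsClique K) (hI : IsIndepSet' G Kᶜ)
    (hx : ∃ x₀ x₁ x₂ : V, x₀ ∈ K ∧ x₁ ∈ K ∧ x₂ ∈ K ∧
      x₀ ≠ x₁ ∧ x₀ ≠ x₂ ∧ x₁ ≠ x₂ ∧
      (∃ y₀, G.Adj x₀ y₀ ∧ G.degree y₀ = 1) ∧
      (∃ y₁, G.Adj x₁ y₁ ∧ G.degree y₁ = 1) ∧
      (∃ y₂, G.Adj x₂ y₂ ∧ G.degree y₂ = 1)) :
    rc G = {v : V | G.degree v = 1}.ncard := by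
  obtain ⟨x₀, x₁, x₂, h₀, h₁, h₂, h₀₁, h₀₂, h₁₂, ⟨y₀, hy₀, hd₀⟩, ⟨y₁, hy₁, hd₁⟩, ⟨y₂, hy₂, hd₂⟩⟩ :=
    hx
  have : Nontrivial V := ⟨x₀, x₁, h₀₁⟩
  choose nbr hnbr using hconn.preconnected.exists_adj_of_nontrivial
  have S : SplitTriangleData G :=
    { K, isClique := hK, isIndep := hI, x := ![x₀, x₁, x₂], y := ![y₀, y₁, y₂], nbr,
      adj_nbr := hnbr
      injective_x := by
        intro i j
        fin_cases i <;> fin_cases j <;> simp [h₀₁, h₀₂, h₁₂, h₀₁.symm, h₀₂.symm, h₁₂.symm]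
      x_mem := by simp [Fin.forall_fin_succ, h₀, h₁, h₂]
      adj_xy := by simp [Fin.forall_fin_succ, hy₀, hy₁, hy₂]
      degree_y := by
        intro i
        fin_cases i <;> assumption }
  exact rc_eq_of_rainbowColorable S.rainbowColorable fun _ hm =>
    ncard_degree_eq_one_le_of_rainbowColorable hm S.not_adj_of_degree_eq_one

/-- A connected split graph whose clique has size at least 3 and in which at least three
distinct clique vertices have pendant neighbours has `rc G` equal to its number of
pendant vertices. -/
theorem stmt9 {V : Type*} [Fintype V] (G : SimpleGraph V) [DecidableRel G.Adj]
    (hconn : G.Connected)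
    (K : Set V) (hK : G.IsClique K) (hI : IsIndepSet' G Kᶜ) (h3 : 3 ≤ K.ncard)
    (hx : ∃ x₀ x₁ x₂ : V, x₀ ∈ K ∧ x₁ ∈ K ∧ x₂ ∈ K ∧
      x₀ ≠ x₁ ∧ x₀ ≠ x₂ ∧ x₁ ≠ x₂ ∧
      (∃ y₀, G.Adj x₀ y₀ ∧ G.degree y₀ = 1) ∧
      (∃ y₁, G.Adj x₁ y₁ ∧ G.degree y₁ = 1) ∧
      (∃ y₂, G.Adj x₂ y₂ ∧ G.degree y₂ = 1)) :
    rc G = {v : V | G.degree v = 1}.ncard :=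
  stmt9_general G hconn K hK hI hx
end

section
/- Let B be a finite family of n-dimensional axis-aligned boxes, each with side length 1 or 1/2 in every dimension. If for each box b one denotes by S(b) ⊆ [n] the set of dimensions where b has side 1/2, then B can be packed without rotation into the n-dimensional unit cube if and only if there exist functions f_b : S(b) → {0, 1/2} for each b ∈ B such that for any two distinct boxes b, b' there exists a dimension k ∈ S(b) ∩ S(b') with f_b(k) ≠ f_{b'}(k). -/
open SimpleGraph Finset

/-- The open interior of the axis-aligned box with corner `x` and side lengths `s`. -/
def openBox {n : ℕ} (x s : Fin n → ℝ) : Set (Fin n → ℝ) :=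
  Set.univ.pi fun k => Set.Ioo (x k) (x k + s k)

/-!
Two boxes are interior-disjoint exactly when some coordinate `k` separates them,
`x k + s k ≤ x' k`. Inside the unit cube, with both sides at least `1/2`, this forces both sides
to be `1/2` and the offsets to be exactly `0` and `1/2`. So rounding the offsets of a packing to
`{0, 1/2}` keeps every separating coordinate; conversely, offsets in `{0, 1/2}`, replaced by `0`
where the side is `1`, already form a packing.
-/

lemma openBox_disjoint_of_le {n : ℕ} {x x' s s' : Fin n → ℝ} (k : Fin n)
    (h : x k + s k ≤ x' k) : Disjoint (openBox x s) (openBox x' s') :=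
  Set.disjoint_univ_pi.2
    ⟨k, Set.Ioo_disjoint_Ioo.2 <| (min_le_left _ _).trans <| h.trans <| le_max_right _ _⟩

lemma exists_le_of_disjoint_openBox {n : ℕ} {x x' s s' : Fin n → ℝ}
    (hs : ∀ k, 0 < s k) (hs' : ∀ k, 0 < s' k) (h : Disjoint (openBox x s) (openBox x' s')) :
    ∃ k, x k + s k ≤ x' k ∨ x' k + s' k ≤ x k := by
  obtain ⟨k, hk⟩ := Set.disjoint_univ_pi.1 h
  refine ⟨k, ?_⟩
  have := hs k
  have := hs' k
  rcases min_le_iff.1 (Set.Ioo_disjoint_Ioo.1 hk) with h | h <;>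
    rcases le_max_iff.1 h with h | h
  · linarith
  · exact .inl h
  · exact .inr h
  · linarith

lemma eq_half_of_add_le {a b s t : ℝ} (ha : 0 ≤ a) (hb : b + t ≤ 1)
    (hs : 1 / 2 ≤ s) (ht : 1 / 2 ≤ t) (hab : a + s ≤ b) :
    s = 1 / 2 ∧ t = 1 / 2 ∧ a = 0 ∧ b = 1 / 2 := by
  refine ⟨?_, ?_, ?_, ?_⟩ <;> linarith

noncomputable def roundHalf (a : ℝ) : ℝ := if a < 1 / 2 then 0 else 1 / 2

lemma roundHalf_eq_zero_or_half (a : ℝ) : roundHalf a = 0 ∨ roundHalf a = 1 / 2 := by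
  unfold roundHalf
  split_ifs <;> simp

lemma roundHalf_zero_ne_half : roundHalf 0 ≠ roundHalf (1 / 2) := by
  norm_num [roundHalf]

lemma exists_halfOffsets_of_packing {ι : Type*} {n : ℕ} {s x : ι → Fin n → ℝ}
    (hs : ∀ b k, 1 / 2 ≤ s b k) (hx : ∀ b k, 0 ≤ x b k ∧ x b k + s b k ≤ 1)
    (hdisj : ∀ b b', b ≠ b' → Disjoint (openBox (x b) (s b)) (openBox (x b') (s b'))) :
    ∃ f : ι → Fin n → ℝ, (∀ b k, f b k = 0 ∨ f b k = 1 / 2) ∧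
      ∀ b b', b ≠ b' → ∃ k, s b k = 1 / 2 ∧ s b' k = 1 / 2 ∧ f b k ≠ f b' k := by
  have hpos : ∀ b k, 0 < s b k := fun b k => by linarith [hs b k]
  refine ⟨fun b k => roundHalf (x b k), fun b k => roundHalf_eq_zero_or_half _, ?_⟩
  intro b b' hbb'
  obtain ⟨k, hk | hk⟩ := exists_le_of_disjoint_openBox (hpos b) (hpos b') (hdisj b b' hbb')
  · obtain ⟨hsb, hsb', hxb, hxb'⟩ :=
      eq_half_of_add_le (hx b k).1 (hx b' k).2 (hs b k) (hs b' k) hk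
    refine ⟨k, hsb, hsb', ?_⟩
    simpa only [hxb, hxb'] using roundHalf_zero_ne_half
  · obtain ⟨hsb', hsb, hxb', hxb⟩ :=
      eq_half_of_add_le (hx b' k).1 (hx b k).2 (hs b' k) (hs b k) hk
    refine ⟨k, hsb, hsb', ?_⟩
    simpa only [hxb, hxb'] using roundHalf_zero_ne_half.symm

lemma exists_packing_of_halfOffsets {ι : Type*} {n : ℕ} {s f : ι → Fin n → ℝ}
    (hs : ∀ b k, s b k ≤ 1) (hf : ∀ b k, f b k = 0 ∨ f b k = 1 / 2)
    (hsep : ∀ b b', b ≠ b' → ∃ k, s b k = 1 / 2 ∧ s b' k = 1 / 2 ∧ f b k ≠ f b' k) :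
    ∃ x : ι → Fin n → ℝ, (∀ b k, 0 ≤ x b k ∧ x b k + s b k ≤ 1) ∧
      ∀ b b', b ≠ b' → Disjoint (openBox (x b) (s b)) (openBox (x b') (s b')) := by
  refine ⟨fun b k => if s b k = 1 / 2 then f b k else 0, fun b k => ?_, ?_⟩
  · dsimp only
    split_ifs with h
    · rcases hf b k with hf | hf <;> rw [hf, h] <;> norm_num
    · exact ⟨le_rfl, by linarith [hs b k]⟩
  · intro b b' hbb'
    obtain ⟨k, hsb, hsb', hne⟩ := hsep b b' hbb'
    rcases hf b k with hfb | hfb <;> rcases hf b' k with hfb' | hfb'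
    · exact absurd (hfb.trans hfb'.symm) hne
    · refine openBox_disjoint_of_le k ?_
      simp only [hsb, hsb', hfb, hfb', if_true]
      norm_num
    · refine (openBox_disjoint_of_le k ?_).symm
      simp only [hsb, hsb', hfb, hfb', if_true]
      norm_num
    · exact absurd (hfb.trans hfb'.symm) hne

theorem stmt14_general {ι : Type*} {n : ℕ} (s : ι → Fin n → ℝ)
    (hs : ∀ b k, s b k = 1 / 2 ∨ s b k = 1) :
    (∃ x : ι → Fin n → ℝ,
        (∀ b k, 0 ≤ x b k ∧ x b k + s b k ≤ 1) ∧
        ∀ b b', b ≠ b' →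
          Disjoint (openBox (x b) (s b)) (openBox (x b') (s b'))) ↔
    (∃ f : ι → Fin n → ℝ, (∀ b k, f b k = 0 ∨ f b k = 1 / 2) ∧
        ∀ b b', b ≠ b' →
          ∃ k, s b k = 1 / 2 ∧ s b' k = 1 / 2 ∧ f b k ≠ f b' k) := by
  have hs_ge : ∀ b k, 1 / 2 ≤ s b k := fun b k => by rcases hs b k with h | h <;> norm_num [h]
  have hs_le : ∀ b k, s b k ≤ 1 := fun b k => by rcases hs b k with h | h <;> norm_num [h]
  exact ⟨fun ⟨_, hx, hdisj⟩ => exists_halfOffsets_of_packing hs_ge hx hdisj,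
    fun ⟨_, hf, hsep⟩ => exists_packing_of_halfOffsets hs_le hf hsep⟩

/-- A finite family of `n`-dimensional boxes with all sides `1` or `1/2` can be packed
without rotation into the unit cube iff each box `b` can be assigned offsets
`f b : S(b) → {0, 1/2}` on its half-side dimensions such that any two distinct boxes
disagree in a dimension where both have side `1/2`. -/
theorem stmt14 {ι : Type*} [Finite ι] {n : ℕ} (s : ι → Fin n → ℝ)
    (hs : ∀ b k, s b k = 1 / 2 ∨ s b k = 1) :
    (∃ x : ι → Fin n → ℝ,
        (∀ b k, 0 ≤ x b k ∧ x b k + s b k ≤ 1) ∧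
        ∀ b b', b ≠ b' →
          Disjoint (openBox (x b) (s b)) (openBox (x b') (s b'))) ↔
    (∃ f : ι → Fin n → ℝ, (∀ b k, f b k = 0 ∨ f b k = 1 / 2) ∧
        ∀ b b', b ≠ b' →
          ∃ k, s b k = 1 / 2 ∧ s b' k = 1 / 2 ∧ f b k ≠ f b' k) :=
  stmt14_general s hs
end

section
/- Let T be a threshold graph with maximum independent set I such that every vertex of I has all its neighbours in the clique V(T) \ I, and the neighbourhoods of vertices of I are totally ordered by inclusion. If the degrees d(v) of vertices v ∈ I satisfy Kraft's inequality ∑_{v ∈ I} 2^{−d(v)} ≤ 1, then T can be rainbow coloured using 2 colours. -/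
/-!
Let `C` be the complement of `I`. Since the neighbourhoods of the vertices of `I` form a chain,
`C` can be enumerated so that the neighbourhood of each `u ∈ I` consists of the first `d(u)`
vertices of `C`. Kraft's inequality provides a prefix code giving each `u ∈ I` a binary word of
length `d(u)`. Colour the edge from `u ∈ I` to the `n`-th vertex of `C` by the `n`-th letter of
the word of `u`, and every edge of the clique `C` by `1`. Two vertices of `I` are joined through
the vertex of `C` indexed by the first position where their words differ. A vertex `u ∈ I` reaches
a non-neighbour `v ∈ C` through a letter `0` of its word: only a longest codeword can consist of
ones only, and by maximality of `I` the vertex `v` has a neighbour in `I`, hence is adjacent to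
every vertex of `I` of maximal degree.
-/

open SimpleGraph Finset

theorem Finset.subset_of_card_le_of_subset_or_subset {α : Type*} {s t : Finset α}
    (h : s ⊆ t ∨ t ⊆ s) (hst : #s ≤ #t) : s ⊆ t :=
  h.elim id fun hts => (eq_of_subset_of_card_le hts hst).ge

section Rank

variable {α β : Type*} [LinearOrder β] {f : α → β} {C D : Finset α}

theorem card_filter_lt_lt_card_filter_lt {x y : α} (hx : x ∈ C) (hxy : f x < f y) :
    #{z ∈ C | f z < f x} < #{z ∈ C | f z < f y} := by
  refine card_lt_card ((ssubset_iff_of_subset fun z hz => ?_).2 ⟨x, ?_, ?_⟩)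
  · simp only [mem_filter] at hz ⊢
    exact ⟨hz.1, hz.2.trans hxy⟩
  · simp [hx, hxy]
  · simp

theorem injOn_card_filter_lt (hf : Set.InjOn f C) :
    Set.InjOn (fun x => #{y ∈ C | f y < f x}) C := by
  intro x hx y hy hxy
  by_contra hne
  rcases lt_or_gt_of_ne (hf.ne hx hy hne) with h | h
  · exact (card_filter_lt_lt_card_filter_lt hx h).ne hxy
  · exact (card_filter_lt_lt_card_filter_lt hy h).ne' hxy

theorem card_filter_lt_lt_card_iff (hf : Set.InjOn f C) (hDC : D ⊆ C)
    (hD : ∀ x ∈ D, ∀ y ∈ C, f y < f x → y ∈ D) {x : α} (hx : x ∈ C) :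
    #{y ∈ C | f y < f x} < #D ↔ x ∈ D := by
  constructor
  · intro hlt
    by_contra hxD
    have hDlt : D ⊆ {y ∈ C | f y < f x} := by
      intro y hy
      refine mem_filter.2 ⟨hDC hy, lt_of_not_ge fun hle => hxD ?_⟩
      rcases hle.lt_or_eq with hlt | heq
      · exact hD y hy x hx hlt
      · rwa [hf hx (hDC hy) heq]
    exact (card_le_card hDlt).not_gt hlt
  · intro hxD
    refine card_lt_card ((ssubset_iff_of_subset fun y hy => ?_).2 ⟨x, hxD, by simp⟩)
    rw [mem_filter] at hy
    exact hD x hxD y hy.1 hy.2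

end Rank

theorem exists_rank_of_chain {α ι : Type*} (C : Finset α) (s : Finset ι) (N : ι → Finset α)
    (hNC : ∀ i ∈ s, N i ⊆ C) (hN : ∀ i ∈ s, ∀ j ∈ s, N i ⊆ N j ∨ N j ⊆ N i) :
    ∃ r : α → ℕ, (∀ i ∈ s, ∀ x ∈ C, x ∈ N i ↔ r x < #(N i)) ∧
      ∀ i ∈ s, ∀ n < #(N i), ∃ x ∈ N i, r x = n := by
  classical
  let _ : LinearOrder α := IsWellOrder.linearOrder WellOrderingRel
  -- Ordering by the size `m x` of the smallest member containing `x` makes every member an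
  -- initial segment; the well-order of `α` breaks ties.
  let m : α → WithTop ℕ := fun x => {i ∈ s | x ∈ N i}.inf fun i => (#(N i) : WithTop ℕ)
  have hm : ∀ i ∈ s, ∀ x, x ∈ N i ↔ m x ≤ #(N i) := by
    intro i hi x
    refine ⟨fun hx => inf_le (mem_filter.2 ⟨hi, hx⟩), fun h => ?_⟩
    obtain ⟨j, hj, hji⟩ := (Finset.inf_le_iff (WithTop.coe_lt_top _)).1 h
    rw [mem_filter] at hj
    exact subset_of_card_le_of_subset_or_subset (hN j hj.1 i hi) (by exact_mod_cast hji) hj.2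
  let key : α → WithTop ℕ ×ₗ α := fun x => toLex (m x, x)
  have hkey_inj : Set.InjOn key C := fun x _ y _ h => congrArg Prod.snd (toLex.injective h)
  have hlower : ∀ i ∈ s, ∀ x ∈ N i, ∀ y ∈ C, key y < key x → y ∈ N i := by
    intro i hi x hx y _ hyx
    have hmyx : m y ≤ m x := by
      rcases Prod.Lex.lt_iff.1 hyx with h | h
      · exact h.le
      · exact h.1.le
    exact (hm i hi y).2 (hmyx.trans ((hm i hi x).1 hx))
  have hiff : ∀ i ∈ s, ∀ x ∈ C, x ∈ N i ↔ #{y ∈ C | key y < key x} < #(N i) := fun i hi x hx =>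
    (card_filter_lt_lt_card_iff hkey_inj (hNC i hi) (hlower i hi) hx).symm
  refine ⟨fun x => #{y ∈ C | key y < key x}, hiff, fun i hi n hn => ?_⟩
  obtain ⟨x, hx, rfl⟩ := surj_on_of_inj_on_of_card_le (t := range #(N i))
    (fun x _ => #{y ∈ C | key y < key x})
    (fun x hx => mem_range.2 ((hiff i hi x (hNC i hi hx)).1 hx))
    (fun x y hx hy h => injOn_card_filter_lt hkey_inj (hNC i hi hx) (hNC i hi hy) h)
    (by simp) n (mem_range.2 hn)
  exact ⟨x, hx, rfl⟩

theorem Nat.exists_testBit_ne_of_notMem_Ico {a b k N : ℕ} (ha : a < 2 ^ N) (hb : b < 2 ^ N)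
    (hdvd : 2 ^ k ∣ a) (hab : b ∉ Set.Ico a (a + 2 ^ k)) :
    ∃ i, k ≤ i ∧ i < N ∧ a.testBit i ≠ b.testBit i := by
  by_contra! h
  have hdiv : b / 2 ^ k = a / 2 ^ k := Nat.eq_of_testBit_eq fun i => by
    rw [Nat.testBit_div_two_pow, Nat.testBit_div_two_pow]
    by_cases hi : i + k < N
    · exact (h _ (by omega) hi).symm
    · rw [Nat.testBit_eq_false_of_lt (hb.trans_le (Nat.pow_le_pow_right two_pos (by omega))),
        Nat.testBit_eq_false_of_lt (ha.trans_le (Nat.pow_le_pow_right two_pos (by omega)))]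
  obtain ⟨q, rfl⟩ := hdvd
  rw [Nat.mul_div_cancel_left q (Nat.two_pow_pos k)] at hdiv
  have := Nat.div_add_mod b (2 ^ k)
  have := Nat.mod_lt b (Nat.two_pow_pos k)
  exact hab ⟨by rw [← hdiv]; omega, by rw [← hdiv] at *; nlinarith⟩

theorem exists_aligned_disjoint_blocks {ι : Type*} (s : Finset ι) (k : ι → ℕ) :
    ∃ a : ι → ℕ, ∀ i ∈ s, 2 ^ k i ∣ a i ∧ a i + 2 ^ k i ≤ ∑ j ∈ s, 2 ^ k j ∧
      (∀ j ∈ s, i ≠ j → a i + 2 ^ k i ≤ a j ∨ a j + 2 ^ k j ≤ a i) ∧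
      (a i + 2 ^ k i = ∑ j ∈ s, 2 ^ k j → ∀ j ∈ s, k i ≤ k j) := by
  classical
  -- The smallest block is placed last, after all the others, whose sizes are multiples of its own.
  induction s using Finset.induction_on_min_value k with
  | empty => exact ⟨0, by simp⟩
  | insert b s hb hmin ih =>
    obtain ⟨a, ha⟩ := ih
    set T := ∑ j ∈ s, 2 ^ k j
    refine ⟨Function.update a b T, fun i hi => ?_⟩
    rw [sum_insert hb]
    rcases mem_insert.1 hi with rfl | hi
    · refine ⟨?_, by simp only [Function.update_self]; omega, fun j hj hij => Or.inr ?_,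
        fun _ j hj => ?_⟩
      · simpa using dvd_sum fun j hj => pow_dvd_pow 2 (hmin j hj)
      · have hj : j ∈ s := (mem_insert.1 hj).resolve_left hij.symm
        simpa [Function.update_of_ne hij.symm] using (ha j hj).2.1
      · rcases mem_insert.1 hj with rfl | hj
        · exact le_rfl
        · exact hmin j hj
    · have hib : i ≠ b := ne_of_mem_of_not_mem hi hb
      obtain ⟨hdvd, hle, hdisj, -⟩ := ha i hi
      simp only [Function.update_of_ne hib]
      refine ⟨hdvd, hle.trans (Nat.le_add_left _ _), fun j hj hij => ?_, fun h => ?_⟩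
      · rcases mem_insert.1 hj with rfl | hj
        · simpa using Or.inl hle
        · rw [Function.update_of_ne (ne_of_mem_of_not_mem hj hb)]
          exact hdisj j hj hij
      · have := Nat.two_pow_pos (k b)
        omega

theorem exists_prefixCode_of_kraft {ι : Type*} (s : Finset ι) (ℓ : ι → ℕ)
    (hkraft : ∑ i ∈ s, ((1 : ℝ) / 2) ^ ℓ i ≤ 1) :
    ∃ word : ι → ℕ → Bool,
      (∀ i ∈ s, ∀ j ∈ s, i ≠ j → ∃ n < min (ℓ i) (ℓ j), word i n ≠ word j n) ∧
      ∀ i ∈ s, (∀ n < ℓ i, word i n = true) → ∀ j ∈ s, ℓ j ≤ ℓ i := by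
  set N := s.sup ℓ
  have hℓN : ∀ i ∈ s, ℓ i ≤ N := fun i hi => le_sup hi
  have hsum : ∑ i ∈ s, 2 ^ (N - ℓ i) ≤ 2 ^ N := by
    have hterm : ∀ i ∈ s, (2 : ℝ) ^ (N - ℓ i) = 2 ^ N * (1 / 2) ^ ℓ i := fun i hi => by
      rw [← pow_sub_mul_pow 2 (hℓN i hi), mul_assoc, ← mul_pow]
      norm_num
    have : (∑ i ∈ s, 2 ^ (N - ℓ i) : ℝ) ≤ 2 ^ N := by
      rw [sum_congr rfl hterm, ← mul_sum]
      exact mul_le_of_le_one_right (by positivity) hkraft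
    exact_mod_cast this
  -- The word of `i` is read off the top `ℓ i` binary digits of the start of its block.
  obtain ⟨a, ha⟩ := exists_aligned_disjoint_blocks s fun i => N - ℓ i
  refine ⟨fun i n => (a i).testBit (N - 1 - n), fun i hi j hj hij => ?_,
    fun i hi hones j hj => ?_⟩
  · wlog hle : ℓ i ≤ ℓ j generalizing i j
    · obtain ⟨n, hn, hne⟩ := this j hj i hi hij.symm (by omega)
      exact ⟨n, by rwa [min_comm], hne.symm⟩
    obtain ⟨hdvd, hbound, hdisj, -⟩ := ha i hi
    obtain ⟨-, hboundj, -, -⟩ := ha j hj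
    have := Nat.two_pow_pos (N - ℓ j)
    have hnotMem : a j ∉ Set.Ico (a i) (a i + 2 ^ (N - ℓ i)) := by
      rintro ⟨h₁, h₂⟩
      rcases hdisj j hj hij with h | h <;> omega
    obtain ⟨m, hkm, hmN, hne⟩ := Nat.exists_testBit_ne_of_notMem_Ico (N := N) (by omega)
      (by omega) hdvd hnotMem
    refine ⟨N - 1 - m, by have := hℓN i hi; omega, ?_⟩
    dsimp only
    rwa [show N - 1 - (N - 1 - m) = m by omega]
  · obtain ⟨hdvd, hbound, -, hlast⟩ := ha i hi
    have hfull : a i + 2 ^ (N - ℓ i) = ∑ j ∈ s, 2 ^ (N - ℓ j) := by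
      refine le_antisymm hbound (not_lt.1 fun hlt => ?_)
      have hnotMem : 2 ^ N - 1 ∉ Set.Ico (a i) (a i + 2 ^ (N - ℓ i)) := fun h => by
        have := h.2
        omega
      obtain ⟨m, hkm, hmN, hne⟩ :=
        Nat.exists_testBit_ne_of_notMem_Ico (N := N) (by omega) (by omega) hdvd hnotMem
      have := hones (N - 1 - m) (by have := hℓN i hi; omega)
      dsimp only at this
      rw [show N - 1 - (N - 1 - m) = m by omega] at this
      simp [Nat.testBit_two_pow_sub_one, this, hmN] at hne
    have := hlast hfull j hj
    have := hℓN j hj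
    omega

section Rainbow

variable {V : Type*} {G : SimpleGraph V}

theorem SimpleGraph.Adj.exists_rainbow_walk {α : Type*} (c : Sym2 V → α) {u v : V}
    (h : G.Adj u v) : ∃ p : G.Walk u v, (p.edges.map c).Nodup :=
  ⟨h.toWalk, by simp⟩

theorem exists_rainbow_walk_of_adj_of_adj {α : Type*} (c : Sym2 V → α) {u y v : V}
    (huy : G.Adj u y) (hyv : G.Adj y v) (hc : c s(u, y) ≠ c s(y, v)) :
    ∃ p : G.Walk u v, (p.edges.map c).Nodup :=
  ⟨.cons huy hyv.toWalk, by simp [hc]⟩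

theorem exists_rainbow_walk_symm {α : Type*} (c : Sym2 V → α) {u v : V}
    (h : ∃ p : G.Walk u v, (p.edges.map c).Nodup) :
    ∃ p : G.Walk v u, (p.edges.map c).Nodup := by
  obtain ⟨p, hp⟩ := h
  exact ⟨p.reverse, by simpa using hp⟩

variable [DecidableEq V] (I : Finset V) (r : V → ℕ) (word : V → ℕ → Bool)

def codeColouring : Sym2 V → ℕ :=
  Sym2.lift ⟨fun x y => if x ∈ I ∧ y ∉ I then (word x (r y)).toNat
    else if y ∈ I ∧ x ∉ I then (word y (r x)).toNat else 1, fun x y => by grind⟩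

variable {I r word}

theorem codeColouring_lt_two (e : Sym2 V) : codeColouring I r word e < 2 := by
  induction e using Sym2.ind with
  | _ x y =>
    simp only [codeColouring, Sym2.lift_mk]
    split_ifs <;> simp [Bool.toNat_le]

theorem codeColouring_mk_of_mem_of_notMem {x y : V} (hx : x ∈ I) (hy : y ∉ I) :
    codeColouring I r word s(x, y) = (word x (r y)).toNat := by
  simp [codeColouring, hx, hy]

theorem codeColouring_mk_of_notMem_of_notMem {x y : V} (hx : x ∉ I) (hy : y ∉ I) :
    codeColouring I r word s(x, y) = 1 := by
  simp [codeColouring, hx, hy]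

theorem isRainbow_codeColouring [Fintype V] [DecidableRel G.Adj]
    (hclique : G.IsClique (↑I : Set V)ᶜ)
    (hr : ∀ u ∈ I, ∀ x ∉ I, r x < G.degree u → G.Adj u x)
    (hr_surj : ∀ u ∈ I, ∀ n < G.degree u, ∃ x ∉ I, r x = n)
    (hsep : ∀ u ∈ I, ∀ v ∈ I, u ≠ v → ∃ n < min (G.degree u) (G.degree v), word u n ≠ word v n)
    (hzero : ∀ u ∈ I, ∀ v ∉ I, ¬ G.Adj u v → ∃ n < G.degree u, word u n = false) :
    IsRainbow G (codeColouring I r word) := by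
  have hout : ∀ u ∈ I, ∀ v ∉ I,
      ∃ p : G.Walk u v, (p.edges.map (codeColouring I r word)).Nodup := by
    intro u hu v hv
    by_cases huv : G.Adj u v
    · exact huv.exists_rainbow_walk _
    obtain ⟨n, hn, hbit⟩ := hzero u hu v hv huv
    obtain ⟨y, hy, rfl⟩ := hr_surj u hu n hn
    have hyv : y ≠ v := by
      rintro rfl
      exact huv (hr u hu y hy hn)
    refine exists_rainbow_walk_of_adj_of_adj _ (hr u hu y hy hn) (hclique hy hv hyv) ?_
    simp [codeColouring_mk_of_mem_of_notMem hu hy, codeColouring_mk_of_notMem_of_notMem hy hv,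
      hbit]
  intro u v
  rcases eq_or_ne u v with rfl | huv
  · exact ⟨.nil, by simp⟩
  by_cases hu : u ∈ I <;> by_cases hv : v ∈ I
  · obtain ⟨n, hn, hne⟩ := hsep u hu v hv huv
    rw [lt_min_iff] at hn
    obtain ⟨y, hy, rfl⟩ := hr_surj u hu n hn.1
    refine exists_rainbow_walk_of_adj_of_adj _ (hr u hu y hy hn.1) (hr v hv y hy hn.2).symm ?_
    rw [Sym2.eq_swap (a := y), codeColouring_mk_of_mem_of_notMem hu hy,
      codeColouring_mk_of_mem_of_notMem hv hy]
    cases hu' : word u (r y) <;> cases hv' : word v (r y) <;> simp_all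
  · exact hout u hu v hv
  · exact exists_rainbow_walk_symm _ (hout v hv u hu)
  · exact (hclique hu hv huv).exists_rainbow_walk _

end Rainbow

theorem SimpleGraph.neighborSet_subset_of_degree_le {V : Type*} [Fintype V] {G : SimpleGraph V}
    [DecidableRel G.Adj] {u w : V}
    (h : G.neighborSet w ⊆ G.neighborSet u ∨ G.neighborSet u ⊆ G.neighborSet w)
    (hdeg : G.degree w ≤ G.degree u) : G.neighborSet w ⊆ G.neighborSet u := by
  simp only [← coe_neighborFinset, coe_subset] at h ⊢
  exact subset_of_card_le_of_subset_or_subset h (by simpa [card_neighborFinset_eq_degree])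

theorem exists_adj_of_forall_card_le {V : Type*} [DecidableEq V] {G : SimpleGraph V}
    {I : Finset V} (hI : IsIndepSet' G ↑I) (hmax : ∀ J : Finset V, IsIndepSet' G ↑J → #J ≤ #I)
    {x : V} (hx : x ∉ I) : ∃ w ∈ I, G.Adj w x := by
  by_contra! h
  have hind : IsIndepSet' G ↑(insert x I) := by
    intro p hp q hq
    simp only [coe_insert, Set.mem_insert_iff, mem_coe] at hp hq
    rcases hp with rfl | hp <;> rcases hq with rfl | hq
    · exact G.irrefl
    · exact fun hpq => h q hq hpq.symm
    · exact h p hp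
    · exact hI p hp q hq
  have := hmax _ hind
  rw [card_insert_of_notMem hx] at this
  omega

theorem stmt15_general {V : Type*} [Fintype V] (G : SimpleGraph V) [DecidableRel G.Adj]
    (I : Finset V) (hI : IsIndepSet' G ↑I)
    (hmax : ∀ J : Finset V, IsIndepSet' G ↑J → J.card ≤ I.card)
    (hnbr : ∀ v ∈ I, G.neighborSet v ⊆ (↑I : Set V)ᶜ)
    (hclique : G.IsClique ((↑I : Set V)ᶜ))
    (hchain : ∀ u ∈ I, ∀ v ∈ I,
      G.neighborSet u ⊆ G.neighborSet v ∨ G.neighborSet v ⊆ G.neighborSet u)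
    (hkraft : ∑ v ∈ I, ((1 : ℝ) / 2) ^ G.degree v ≤ 1) :
    RainbowColorable G 2 := by
  classical
  have hnbr' : ∀ u ∈ I, G.neighborFinset u ⊆ Iᶜ := fun u hu => by
    simpa only [← coe_neighborFinset, ← coe_compl, coe_subset] using hnbr u hu
  obtain ⟨r, hr, hr_surj⟩ := exists_rank_of_chain Iᶜ I (G.neighborFinset ·) hnbr'
    fun u hu v hv => by simpa only [← coe_neighborFinset, coe_subset] using hchain u hu v hv
  simp only [card_neighborFinset_eq_degree, mem_neighborFinset] at hr hr_surj
  obtain ⟨word, hsep, hlongest⟩ := exists_prefixCode_of_kraft I (G.degree ·) hkraft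
  refine ⟨codeColouring I r word, fun e _ => codeColouring_lt_two e,
    isRainbow_codeColouring hclique (fun u hu x hx => (hr u hu x (mem_compl.2 hx)).2)
      (fun u hu n hn => ?_) hsep fun u hu v hv huv => ?_⟩
  · obtain ⟨x, hx, rfl⟩ := hr_surj u hu n hn
    exact ⟨x, mem_compl.1 (hnbr' u hu ((mem_neighborFinset ..).2 hx)), rfl⟩
  · by_contra! hones
    obtain ⟨w, hw, hwv⟩ := exists_adj_of_forall_card_le hI hmax hv
    have hdeg := hlongest u hu (by simpa using hones)
    exact huv (G.neighborSet_subset_of_degree_le (hchain w hw u hu) (hdeg w hw) hwv)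

/-- A threshold graph whose maximum independent set `I` (with all neighbours of `I` in the
complementary clique and neighbourhoods of `I` totally ordered by inclusion) satisfies
Kraft's inequality can be rainbow coloured with two colours. -/
theorem stmt15 {V : Type*} [Fintype V] (G : SimpleGraph V) [DecidableRel G.Adj]
    (hthresh : ∃ (w : V → ℝ) (t : ℝ), ∀ u v : V, u ≠ v → (G.Adj u v ↔ t ≤ w u + w v))
    (I : Finset V) (hI : IsIndepSet' G ↑I)
    (hmax : ∀ J : Finset V, IsIndepSet' G ↑J → J.card ≤ I.card)
    (hnbr : ∀ v ∈ I, G.neighborSet v ⊆ (↑I : Set V)ᶜ)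
    (hclique : G.IsClique ((↑I : Set V)ᶜ))
    (hchain : ∀ u ∈ I, ∀ v ∈ I,
      G.neighborSet u ⊆ G.neighborSet v ∨ G.neighborSet v ⊆ G.neighborSet u)
    (hkraft : ∑ v ∈ I, ((1 : ℝ) / 2) ^ G.degree v ≤ 1) :
    RainbowColorable G 2 :=
  stmt15_general G I hI hmax hnbr hclique hchain hkraft
end
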